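/- For every integer L ≥ 1, every K ∈ {1,…,L} and every s ∈ ℝ^L, top_{K,ε}(s) converges to top_K(s) as ε → 0⁺. -/

import Mathlib

open MeasureTheory ProbabilityTheory

/-- The list of coordinates of `s : ℝ^L` sorted in decreasing order. -/
noncomputable def descSort {L : ℕ} (s : Fin L → ℝ) : List ℝ :=
  (Multiset.sort (Multiset.map s Finset.univ.val) (· ≤ ·)).reverse

/-- `kthLargest K s` is the `K`-th largest coordinate of `s` (1-indexed), i.e. `s_(K)`. -/
noncomputable def kthLargest {L : ℕ} (K : ℕ) (s : Fin L → ℝ) : ℝ :=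
  (descSort s).getD (K - 1) 0

/-- `topsum K s` is the sum of the `K` largest coordinates of `s`,
with the convention `topsum 0 s = 0`. -/
noncomputable def topsum {L : ℕ} (K : ℕ) (s : Fin L → ℝ) : ℝ :=
  ((descSort s).take K).sum

/-- The standard Gaussian measure `N(0, Id_L)` on `ℝ^L`:
the coordinates are i.i.d. standard normal random variables. -/
noncomputable def stdGaussian (L : ℕ) : Measure (EuclideanSpace ℝ (Fin L)) :=
  (Measure.pi (fun _ : Fin L => gaussianReal 0 1)).map (WithLp.toLp 2)

/-- The smoothed top-sum `topsumSm K ε s = E[topsum K (s + ε Z)]`, `Z ∼ N(0, Id_L)`. -/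
noncomputable def topsumSm {L : ℕ} (K : ℕ) (ε : ℝ) (s : EuclideanSpace ℝ (Fin L)) : ℝ :=
  ∫ z, topsum K (s + ε • z) ∂(stdGaussian L)

/-- The smoothed top-K operator `topSm K ε s = topsumSm K ε s - topsumSm (K-1) ε s`. -/
noncomputable def topSm {L : ℕ} (K : ℕ) (ε : ℝ) (s : EuclideanSpace ℝ (Fin L)) : ℝ :=
  topsumSm K ε s - topsumSm (K - 1) ε s

/-- The 0/1 vector whose entries equal 1 exactly at the `K` coordinates carrying the
`K` largest values of `v` (well defined when the `K`-th and `(K+1)`-th largest values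
of `v` are distinct). -/
noncomputable def argtops {L : ℕ} (K : ℕ) (v : Fin L → ℝ) : Fin L → ℝ :=
  fun i => if kthLargest K v ≤ v i then 1 else 0

/-!
Since `topsum K - topsum (K - 1) = kthLargest K` pointwise, `topSm K ε s` is the Gaussian
average of `kthLargest K (s + ε • Z)`. The map `kthLargest K` is 1-Lipschitz, because
`t ≤ kthLargest K v` holds exactly when at least `K` coordinates of `v` are `≥ t`. Hence
`|topSm K ε s - kthLargest K s| ≤ |ε| · E‖Z‖`, and `E‖Z‖ < ∞` for a Gaussian vector.
-/

open Finset Filter Topology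

theorem List.SortedGE.le_getElem_iff_lt_countP {α : Type*} [LinearOrder α] {l : List α}
    (hl : l.SortedGE) {k : ℕ} (hk : k < l.length) (t : α) :
    t ≤ l[k] ↔ k < l.countP (t ≤ ·) := by
  constructor
  · intro ht
    have hprefix : (l.take (k + 1)).countP (t ≤ ·) = k + 1 := by
      rw [List.countP_eq_length.2, List.length_take]
      · omega
      rintro a ha
      obtain ⟨j, hj, rfl⟩ := List.mem_take_iff_getElem.1 ha
      exact decide_eq_true (ht.trans (hl.getElem_ge_getElem_of_le (by omega)))
    have := (List.take_sublist (k + 1) l).countP_le (p := (t ≤ ·))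
    omega
  · intro hcount
    by_contra! ht
    have hsuffix : (l.drop k).countP (t ≤ ·) = 0 := by
      refine List.countP_eq_zero.2 fun a ha => ?_
      obtain ⟨j, hj, rfl⟩ := List.mem_drop_iff_getElem.1 ha
      simpa using (hl.getElem_ge_getElem_of_le (by omega)).trans_lt ht
    have hprefix : (l.take k).countP (t ≤ ·) ≤ k :=
      List.countP_le_length.trans (List.length_take_le k l)
    rw [← l.take_append_drop k, List.countP_append] at hcount
    omega

theorem descSort_sortedGE {L : ℕ} (v : Fin L → ℝ) : (descSort v).SortedGE := by
  rw [descSort, List.sortedGE_reverse, List.sortedLE_iff_pairwise]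
  exact Multiset.pairwise_sort _ _

theorem length_descSort {L : ℕ} (v : Fin L → ℝ) : (descSort v).length = L := by
  simp [descSort]

theorem countP_descSort {L : ℕ} (v : Fin L → ℝ) (p : ℝ → Prop) [DecidablePred p] :
    (descSort v).countP (p ·) = #{i | p (v i)} := by
  rw [descSort, List.countP_reverse, ← Multiset.coe_countP, Multiset.sort_eq,
    Multiset.countP_map]
  rfl

theorem le_kthLargest_iff {L K : ℕ} (hK1 : 1 ≤ K) (hKL : K ≤ L) (v : Fin L → ℝ) (t : ℝ) :
    t ≤ kthLargest K v ↔ K ≤ #{i | t ≤ v i} := by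
  have hk : K - 1 < (descSort v).length := by rw [length_descSort]; omega
  rw [kthLargest, List.getD_eq_getElem _ _ hk,
    (descSort_sortedGE v).le_getElem_iff_lt_countP hk, countP_descSort v (t ≤ ·)]
  omega

theorem kthLargest_mono {L K : ℕ} (hK1 : 1 ≤ K) (hKL : K ≤ L) {u v : Fin L → ℝ}
    (h : ∀ i, u i ≤ v i) : kthLargest K u ≤ kthLargest K v := by
  rw [le_kthLargest_iff hK1 hKL]
  refine ((le_kthLargest_iff hK1 hKL u _).1 le_rfl).trans (card_le_card ?_)
  exact monotone_filter_right _ fun i _ hi => hi.trans (h i)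

theorem kthLargest_add_const {L K : ℕ} (hK1 : 1 ≤ K) (hKL : K ≤ L) (v : Fin L → ℝ) (c : ℝ) :
    kthLargest K (fun i => v i + c) = kthLargest K v + c :=
  eq_of_forall_le_iff fun t => by
    simp only [le_kthLargest_iff hK1 hKL, ← sub_le_iff_le_add]

theorem lipschitzWith_kthLargest {L K : ℕ} (hK1 : 1 ≤ K) (hKL : K ≤ L) :
    LipschitzWith 1 (fun v : EuclideanSpace ℝ (Fin L) => kthLargest K v) :=
  LipschitzWith.of_le_add fun u v => by
    rw [← kthLargest_add_const hK1 hKL]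
    refine kthLargest_mono hK1 hKL fun i => ?_
    have hi := PiLp.dist_apply_le u v i
    rw [Real.dist_eq] at hi
    linarith [le_abs_self (u i - v i)]

theorem abs_kthLargest_add_smul_sub_le {L K : ℕ} (hK1 : 1 ≤ K) (hKL : K ≤ L)
    (s z : EuclideanSpace ℝ (Fin L)) (ε : ℝ) :
    |kthLargest K (s + ε • z) - kthLargest K s| ≤ |ε| * ‖z‖ := by
  simpa [Real.dist_eq, dist_self_add_left, norm_smul] using
    (lipschitzWith_kthLargest hK1 hKL).dist_le_mul (s + ε • z) s

theorem topsum_succ {L j : ℕ} (hj : j < L) (v : Fin L → ℝ) :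
    topsum (j + 1) v = topsum j v + kthLargest (j + 1) v := by
  have hj' : j < (descSort v).length := by rw [length_descSort]; exact hj
  rw [topsum, topsum, kthLargest, List.sum_take_succ _ _ hj', Nat.add_sub_cancel,
    List.getD_eq_getElem _ _ hj']

theorem topsum_sub_topsum_sub_one {L K : ℕ} (hK1 : 1 ≤ K) (hKL : K ≤ L) (v : Fin L → ℝ) :
    topsum K v - topsum (K - 1) v = kthLargest K v := by
  obtain ⟨j, rfl⟩ : ∃ j, K = j + 1 := ⟨K - 1, by omega⟩
  rw [topsum_succ (by omega) v, Nat.add_sub_cancel, add_sub_cancel_left]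

section Smoothing

variable {L K : ℕ} {μ : Measure (EuclideanSpace ℝ (Fin L))}

theorem integrable_kthLargest_add_smul [IsFiniteMeasure μ] (hμ : Integrable (‖·‖) μ)
    (hK1 : 1 ≤ K) (hKL : K ≤ L) (s : EuclideanSpace ℝ (Fin L)) (ε : ℝ) :
    Integrable (fun z : EuclideanSpace ℝ (Fin L) => kthLargest K (s + ε • z)) μ := by
  refine ((integrable_const |kthLargest K s|).add (hμ.const_mul |ε|)).mono'
    ((lipschitzWith_kthLargest hK1 hKL).continuous.comp_aestronglyMeasurable
      (by fun_prop)) (ae_of_all _ fun z => ?_)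
  have := abs_kthLargest_add_smul_sub_le hK1 hKL s z ε
  rw [Real.norm_eq_abs, Pi.add_apply]
  linarith [abs_sub_abs_le_abs_sub (kthLargest K (s + ε • z)) (kthLargest K s)]

theorem integrable_topsum_add_smul [IsFiniteMeasure μ] (hμ : Integrable (‖·‖) μ) {j : ℕ}
    (hj : j ≤ L) (s : EuclideanSpace ℝ (Fin L)) (ε : ℝ) :
    Integrable (fun z : EuclideanSpace ℝ (Fin L) => topsum j (s + ε • z)) μ := by
  induction j with
  | zero => simp [topsum]
  | succ j ih =>
    simp only [topsum_succ hj]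
    exact (ih (by omega)).add (integrable_kthLargest_add_smul hμ (by omega) hj s ε)

theorem abs_integral_kthLargest_add_smul_sub_le [IsProbabilityMeasure μ]
    (hμ : Integrable (‖·‖) μ) (hK1 : 1 ≤ K) (hKL : K ≤ L) (s : EuclideanSpace ℝ (Fin L))
    (ε : ℝ) : |∫ z, kthLargest K (s + ε • z) ∂μ - kthLargest K s| ≤ |ε| * ∫ z, ‖z‖ ∂μ := by
  have hint := integrable_kthLargest_add_smul hμ hK1 hKL s ε
  calc |∫ z, kthLargest K (s + ε • z) ∂μ - kthLargest K s|
      = |∫ z, (kthLargest K (s + ε • z) - kthLargest K s) ∂μ| := by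
        rw [integral_sub hint (integrable_const _), integral_const, probReal_univ, one_smul]
    _ ≤ ∫ z, |kthLargest K (s + ε • z) - kthLargest K s| ∂μ := abs_integral_le_integral_abs
    _ ≤ ∫ z, |ε| * ‖z‖ ∂μ := integral_mono (hint.sub (integrable_const _)).abs
        (hμ.const_mul _) fun z => abs_kthLargest_add_smul_sub_le hK1 hKL s z ε
    _ = |ε| * ∫ z, ‖z‖ ∂μ := integral_const_mul _ _

theorem tendsto_integral_kthLargest_add_smul [IsProbabilityMeasure μ]
    (hμ : Integrable (‖·‖) μ) (hK1 : 1 ≤ K) (hKL : K ≤ L) (s : EuclideanSpace ℝ (Fin L)) :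
    Tendsto (fun ε : ℝ => ∫ z, kthLargest K (s + ε • z) ∂μ) (𝓝 0) (𝓝 (kthLargest K s)) := by
  have hbound : Tendsto (fun ε : ℝ => |ε| * ∫ z, ‖z‖ ∂μ) (𝓝 0) (𝓝 0) := by
    simpa using ((continuous_abs.tendsto (0 : ℝ)).mul_const (∫ z, ‖z‖ ∂μ))
  exact tendsto_iff_norm_sub_tendsto_zero.2 <| squeeze_zero (fun _ => norm_nonneg _)
    (fun ε => abs_integral_kthLargest_add_smul_sub_le hμ hK1 hKL s ε) hbound

end Smoothing

instance (L : ℕ) : IsGaussian (stdGaussian L) := by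
  rw [_root_.stdGaussian, map_pi_eq_stdGaussian]
  infer_instance

theorem topSm_eq_integral_kthLargest {L K : ℕ} (hK1 : 1 ≤ K) (hKL : K ≤ L)
    (s : EuclideanSpace ℝ (Fin L)) (ε : ℝ) :
    topSm K ε s = ∫ z, kthLargest K (s + ε • z) ∂(stdGaussian L) := by
  have hμ : Integrable (‖·‖) (stdGaussian L) := IsGaussian.integrable_id.norm
  rw [topSm, topsumSm, topsumSm, ← integral_sub (integrable_topsum_add_smul hμ hKL s ε)
    (integrable_topsum_add_smul hμ (by omega) s ε)]
  simp only [topsum_sub_topsum_sub_one hK1 hKL]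

theorem topSm_tendsto_top_general (L K : ℕ) (hK1 : 1 ≤ K) (hKL : K ≤ L)
    (s : EuclideanSpace ℝ (Fin L)) :
    Filter.Tendsto (fun ε : ℝ => topSm K ε s) (nhdsWithin 0 (Set.Ioi 0))
      (nhds (kthLargest K s)) := by
  simp only [topSm_eq_integral_kthLargest hK1 hKL]
  exact (tendsto_integral_kthLargest_add_smul IsGaussian.integrable_id.norm hK1 hKL s).mono_left
    nhdsWithin_le_nhds

/-- `topSm K ε s → top_K s` as `ε → 0⁺`. -/
theorem topSm_tendsto_top (L K : ℕ) (hL : 1 ≤ L) (hK1 : 1 ≤ K) (hKL : K ≤ L)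
    (s : EuclideanSpace ℝ (Fin L)) :
    Filter.Tendsto (fun ε : ℝ => topSm K ε s) (nhdsWithin 0 (Set.Ioi 0))
      (nhds (kthLargest K s)) :=
  topSm_tendsto_top_general L K hK1 hKL s
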